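/- In the complete graph K_{6} on vertex set {1,...,6} with the 3-edge-coloring where color 1 = {65, 51, 12, 24, 45}, color 2 = {23, 14, 46, 35, 16} and color 3 consists of the remaining 5 edges, every color class has exactly 5 edges, but no perfect matching of K_6 contains exactly one edge of each color. -/

import Mathlib

/-!
Vertex 3 lies on no edge of colour 1. If a rainbow matching covered it by its colour-2 edge
(`23` or `35`), the colour-3 edge would avoid 3 and so be `25` or `26`; the only disjoint
choice is `35, 26`, which leaves `14`, of colour 2. If it covered 3 by its colour-3 edge `3x`, then
`x ∈ {1, 4, 6}` and the colour-2 edge, avoiding 3, lies in the colour-2 triangle on `{1, 4, 6}`,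
leaving `25` for colour 1, but `25` has colour 3.
-/

/-- Color class 1 (bold edges) of the coloring of `K_6`; vertices `1,…,6`
are represented by `0,…,5 : Fin 6`. -/
def color1 : Finset (Sym2 (Fin 6)) := {s(4, 5), s(0, 4), s(0, 1), s(1, 3), s(3, 4)}

/-- Color class 2 (dashed edges). -/
def color2 : Finset (Sym2 (Fin 6)) := {s(1, 2), s(0, 3), s(3, 5), s(2, 4), s(0, 5)}

/-- Color class 3 (the remaining edges). -/
def color3 : Finset (Sym2 (Fin 6)) := {s(0, 2), s(1, 4), s(1, 5), s(2, 3), s(2, 5)}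

theorem not_cover_of_mem_color :
    ∀ e₁ ∈ color1, ∀ e₂ ∈ color2, ∀ e₃ ∈ color3, ¬ ∀ v : Fin 6, v ∈ e₁ ∨ v ∈ e₂ ∨ v ∈ e₃ := by
  decide

theorem stmt_10 :
    color1.card = 5 ∧ color2.card = 5 ∧ color3.card = 5 ∧
    Disjoint color1 color2 ∧ Disjoint color1 color3 ∧ Disjoint color2 color3 ∧
    color1 ∪ color2 ∪ color3 = (⊤ : SimpleGraph (Fin 6)).edgeFinset ∧
    ¬ ∃ a b c d e f : Fin 6, ({a, b, c, d, e, f} : Finset (Fin 6)) = Finset.univ ∧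
      s(a, b) ∈ color1 ∧ s(c, d) ∈ color2 ∧ s(e, f) ∈ color3 := by
  refine ⟨by decide, by decide, by decide, by decide, by decide, by decide, by decide, ?_⟩
  rintro ⟨a, b, c, d, e, f, hcover, h₁, h₂, h₃⟩
  refine not_cover_of_mem_color _ h₁ _ h₂ _ h₃ fun v ↦ ?_
  have hv : v ∈ ({a, b, c, d, e, f} : Finset (Fin 6)) := hcover ▸ Finset.mem_univ v
  simp only [Finset.mem_insert, Finset.mem_singleton] at hv
  simp only [Sym2.mem_iff]
  tauto
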